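/- arXiv:0812.1686 — 2 statements merged into one kernel-verified Lean document; each statement's English description precedes it below -/
import Mathlib

section
/- Let $(B_l)_{l\in\mathbb{N}}$ be a sequence of Banach spaces with $B_{l+1} \subseteq B_l$ and continuous embeddings $B_{l+1} \hookrightarrow B_l$ for every $l$, such that $\bigcap_{\mu\in\mathbb{N}} B_\mu$ is dense in each $B_l$. Let $R\colon B_0 \to B_0$ be a linear operator with $R(B_l)\subseteq B_l$ such that $R|_{B_l}$ is a compact endomorphism of $B_l$ for each $l$. Then $\ker(I+R) \subseteq \bigcap_{l\in\mathbb{N}} B_l$. -/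
/-!
By induction on `l` it suffices to treat two Banach spaces: an injective `j : Y → X` with dense
range and compact `S` on `X`, `T` on `Y` with `j T = S j`; then `ker (1 + S) ⊆ range j`.

The kernel `N` of `1 + S` is finite-dimensional, and the Fredholm alternative says that `1 + S` is
surjective once injective; applied to a right inverse of `1 + S`, it also gives the converse.
Comparing the finite-rank perturbations `1 + S + L P` (`P` a projection onto `N`) then shows that
`N` embeds into the cokernel, which produces a continuous surjection `π : X → N` vanishing on the
range of `1 + S`. Since `j` has dense range, `π j` is onto `N`, so there is a finite-rank
`M : X → Y` with `1 + S + j M` injective. The intertwined operator `1 + T + M j` on `Y` is then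
injective, hence surjective, and for `x ∈ N` the solution of `(1 + T + M j) y = M x` has `j y = x`.
-/

open Function

universe u

theorem exists_injective_of_forall_surjective_injective {K : Type*} {V W : Type u} [Field K]
    [AddCommGroup V] [Module K V] [AddCommGroup W] [Module K W]
    (h : ∀ f : V →ₗ[K] W, Surjective f → Injective f) :
    ∃ f : V →ₗ[K] W, Injective f := by
  by_cases hrank : Module.rank K W < Module.rank K V
  · obtain ⟨g, hg⟩ := Module.Free.exists_linearMap_injective_of_rank_lt hrank
    obtain ⟨f, hf⟩ := g.exists_leftInverse_of_injective (LinearMap.ker_eq_bot.mpr hg)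
    exact ⟨f, h f fun w ↦ ⟨g w, LinearMap.congr_fun hf w⟩⟩
  · exact Module.Free.exists_linearMap_injective_of_linearIndependent_of_rank_le
      (Module.Free.chooseBasis K W).linearIndependent
      (Module.Free.rank_eq_card_chooseBasisIndex K W ▸ not_lt.mp hrank)

section KernelPerturbation

variable {R X : Type*} [Ring R] [AddCommGroup X] [Module R X] {A : X →ₗ[R] X}
  {P : X →ₗ[R] A.ker} (L : A.ker →ₗ[R] X)

theorem injective_add_comp_of_injective_mkQ_comp (hP : ∀ n : A.ker, P n = n)
    (hL : Injective (A.range.mkQ ∘ₗ L)) : Injective (A + L ∘ₗ P) := by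
  rw [← LinearMap.ker_eq_bot, LinearMap.ker_eq_bot']
  intro x hx
  have hPx : P x = 0 := hL <| by
    simpa [Submodule.Quotient.mk_eq_zero] using
      ⟨-x, by simpa [neg_eq_iff_add_eq_zero] using hx⟩
  have hAx : A x = 0 := by simpa [hPx] using hx
  simpa [hPx] using (congrArg Subtype.val (hP ⟨x, hAx⟩)).symm

theorem injective_mkQ_comp_of_injective_add_comp (hP : ∀ n : A.ker, P n = n)
    (hA : Injective (A + L ∘ₗ P)) : Injective (A.range.mkQ ∘ₗ L) := by
  rw [← LinearMap.ker_eq_bot, LinearMap.ker_eq_bot']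
  intro n hn
  obtain ⟨u, hu⟩ : L n ∈ A.range := by simpa [Submodule.Quotient.mk_eq_zero] using hn
  have hx : (A + L ∘ₗ P) (n - u + P u) = 0 := by simp [hP, hu]
  simpa [hP] using congrArg P (hA (hx.trans (map_zero _).symm))

theorem surjective_add_comp_of_surjective_mkQ_comp (hP : ∀ n : A.ker, P n = n)
    (hL : Surjective (A.range.mkQ ∘ₗ L)) : Surjective (A + L ∘ₗ P) := by
  intro z
  obtain ⟨n, hn⟩ := hL (A.range.mkQ z)
  obtain ⟨u, hu⟩ : z - L n ∈ A.range := by simpa [Submodule.Quotient.eq] using hn.symm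
  exact ⟨u + n - P u, by simp [hP, hu]⟩

end KernelPerturbation

theorem DenseRange.surjective_of_finiteDimensional {𝕜 E F : Type*}
    [NontriviallyNormedField 𝕜] [CompleteSpace 𝕜] [AddCommGroup E] [Module 𝕜 E]
    [TopologicalSpace E] [AddCommGroup F] [Module 𝕜 F] [TopologicalSpace F]
    [IsTopologicalAddGroup F] [ContinuousSMul 𝕜 F] [T2Space F] [FiniteDimensional 𝕜 F]
    {f : E →L[𝕜] F} (hf : DenseRange f) : Surjective f := by
  have hclosed := (LinearMap.range (f : E →ₗ[𝕜] F)).closed_of_finiteDimensional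
  rw [← Set.range_eq_univ, ← hf.closure_eq]
  exact hclosed.closure_eq.symm

theorem ContinuousLinearMap.HasRightInverse.of_surjective_of_closedComplemented_ker
    {𝕜 E F : Type*} [NontriviallyNormedField 𝕜] [NormedAddCommGroup E] [NormedSpace 𝕜 E]
    [CompleteSpace E] [NormedAddCommGroup F] [NormedSpace 𝕜 F] [CompleteSpace F]
    {f : E →L[𝕜] F} (hf : Surjective f) (hker : (f : E →ₗ[𝕜] F).ker.ClosedComplemented) :
    f.HasRightInverse := by
  obtain ⟨P, hP⟩ := hker
  let e := f.equivProdOfSurjectiveOfIsCompl P (LinearMap.range_eq_top.mpr hf)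
    (LinearMap.range_eq_top.mpr fun n ↦ ⟨n, hP n⟩) (LinearMap.isCompl_of_proj hP)
  refine ⟨e.symm.toContinuousLinearMap ∘L ContinuousLinearMap.inl 𝕜 F _, fun y ↦ ?_⟩
  have := congrArg Prod.fst (e.apply_symm_apply (y, 0))
  rwa [ContinuousLinearMap.equivProdOfSurjectiveOfIsCompl_apply] at this

namespace IsCompactOperator

variable {𝕜 X : Type*} [RCLike 𝕜] [NormedAddCommGroup X] [NormedSpace 𝕜 X] {S : X →L[𝕜] X}

theorem finiteDimensional_ker_one_add (hS : IsCompactOperator S) :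
    FiniteDimensional 𝕜 (1 + S : X →L[𝕜] X).ker := by
  set N := (1 + S : X →L[𝕜] X).ker
  have hSN : ∀ x ∈ N, (S : X →ₗ[𝕜] X) x ∈ N := fun x hx ↦ by
    simpa [N, ← map_add] using congrArg S hx
  have hid : (id : N → N) = -((S : X →ₗ[𝕜] X).restrict hSN) :=
    funext fun x ↦ Subtype.ext (eq_neg_of_add_eq_zero_left x.2)
  apply FiniteDimensional.of_isCompactOperator_id
  rw [hid]
  exact (hS.restrict hSN (ContinuousLinearMap.isClosed_ker _)).neg

variable [CompleteSpace X]

theorem bijective_one_add_of_injective (hS : IsCompactOperator S)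
    (h : Injective (1 + S : X →L[𝕜] X)) : Bijective (1 + S : X →L[𝕜] X) := by
  rcases hasEigenvalue_or_mem_resolventSet hS (μ := -1) (by simp) with hμ | hμ
  · obtain ⟨x, hx⟩ := hμ.exists_hasEigenvector
    rw [Module.End.hasEigenvector_iff, Module.End.mem_eigenspace_iff] at hx
    exact absurd (h (by simpa [eq_neg_iff_add_eq_zero, add_comm] using hx.1)) hx.2
  · have h : algebraMap 𝕜 (X →L[𝕜] X) (-1) - S = -(1 + S) := by
      rw [map_neg, map_one, neg_add']
    rwa [spectrum.mem_resolventSet_iff, h, IsUnit.neg_iff,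
      ContinuousLinearMap.isUnit_iff_bijective] at hμ

/-- A right inverse `B` of `1 + S` equals `1 - S B`, a compact perturbation of the identity. -/
theorem injective_one_add_of_surjective (hS : IsCompactOperator S)
    (h : Surjective (1 + S : X →L[𝕜] X)) : Injective (1 + S : X →L[𝕜] X) := by
  have := hS.finiteDimensional_ker_one_add
  obtain ⟨B, hB⟩ := ContinuousLinearMap.HasRightInverse.of_surjective_of_closedComplemented_ker h
    (Submodule.ClosedComplemented.of_finiteDimensional _)
  have hB' : B = 1 + -(S ∘L B) := by
    ext x
    simpa [← sub_eq_add_neg, eq_sub_iff_add_eq] using hB x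
  have hBbij : Bijective B := by
    rw [hB'] at hB ⊢
    exact bijective_one_add_of_injective (hS.comp_clm B).neg hB.injective
  intro x y hxy
  obtain ⟨x, rfl⟩ := hBbij.2 x
  obtain ⟨y, rfl⟩ := hBbij.2 y
  rw [hB x, hB y] at hxy
  rw [hxy]

theorem exists_injective_ker_one_add_to_quotient_range (hS : IsCompactOperator S) :
    ∃ β : (1 + S : X →L[𝕜] X).ker →ₗ[𝕜] X ⧸ (1 + S : X →L[𝕜] X).range, Injective β := by
  set A := (1 + S : X →L[𝕜] X)
  have := hS.finiteDimensional_ker_one_add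
  obtain ⟨P, hP⟩ := Submodule.ClosedComplemented.of_finiteDimensional (A : X →ₗ[𝕜] X).ker
  obtain ⟨s, hs⟩ := A.range.mkQ.exists_rightInverse_of_surjective A.range.range_mkQ
  refine exists_injective_of_forall_surjective_injective fun β hβ ↦ ?_
  set L := s ∘ₗ β
  have hL : A.range.mkQ ∘ₗ L = β := by rw [← LinearMap.comp_assoc, hs, LinearMap.id_comp]
  have hcpt : IsCompactOperator (S + L.toContinuousLinearMap ∘L P) :=
    hS.add ((isCompactOperator_of_locallyCompactSpace_dom P).clm_comp L.toContinuousLinearMap)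
  rw [← hL] at hβ ⊢
  have hsurj : Surjective (A + L.toContinuousLinearMap ∘L P) :=
    surjective_add_comp_of_surjective_mkQ_comp L hP hβ
  rw [add_assoc] at hsurj
  have hinj := injective_one_add_of_surjective hcpt hsurj
  rw [← add_assoc] at hinj
  exact injective_mkQ_comp_of_injective_add_comp L hP hinj

/-- A finite-rank perturbation `1 + S + L P` that is invertible, with `L` embedding the kernel into
a complement of the range, yields `π = P (1 + S + L P)⁻¹`. -/
theorem exists_surjective_comp_one_add_eq_zero (hS : IsCompactOperator S) :
    ∃ π : X →L[𝕜] (1 + S : X →L[𝕜] X).ker,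
      Surjective π ∧ ∀ x, π ((1 + S : X →L[𝕜] X) x) = 0 := by
  set A := (1 + S : X →L[𝕜] X)
  have := hS.finiteDimensional_ker_one_add
  obtain ⟨P, hP⟩ := Submodule.ClosedComplemented.of_finiteDimensional (A : X →ₗ[𝕜] X).ker
  obtain ⟨s, hs⟩ := A.range.mkQ.exists_rightInverse_of_surjective A.range.range_mkQ
  obtain ⟨β, hβ⟩ : ∃ β : A.ker →ₗ[𝕜] X ⧸ A.range, Injective β :=
    hS.exists_injective_ker_one_add_to_quotient_range
  set L := s ∘ₗ β
  have hL : A.range.mkQ ∘ₗ L = β := by rw [← LinearMap.comp_assoc, hs, LinearMap.id_comp]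
  have hcpt : IsCompactOperator (S + L.toContinuousLinearMap ∘L P) :=
    hS.add ((isCompactOperator_of_locallyCompactSpace_dom P).clm_comp L.toContinuousLinearMap)
  have hinj : Injective (A + L.toContinuousLinearMap ∘L P) :=
    injective_add_comp_of_injective_mkQ_comp L hP (hL ▸ hβ)
  rw [add_assoc] at hinj
  have hbij := bijective_one_add_of_injective hcpt hinj
  rw [← add_assoc] at hbij
  let e := ContinuousLinearEquiv.ofBijective _ (LinearMap.ker_eq_bot.mpr hbij.1)
    (LinearMap.range_eq_top.mpr hbij.2)
  have he (x : X) : e x = A x + L (P x) := rfl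
  refine ⟨(P : X →L[𝕜] A.ker) ∘L e.symm.toContinuousLinearMap, fun n ↦ ⟨L n, ?_⟩, fun x ↦ ?_⟩
  · have : e n = L n := by simp [he, hP]
    simp [← this, hP]
  · have : e (x - P x) = A x := by simp [he, hP]
    simp [← this, hP]

theorem exists_injective_one_add_add_comp {Y : Type*} [NormedAddCommGroup Y] [NormedSpace 𝕜 Y]
    {j : Y →L[𝕜] X} (hjd : DenseRange j) (hS : IsCompactOperator S) :
    ∃ M : X →L[𝕜] Y, IsCompactOperator M ∧ Injective (1 + (S + j ∘L M) : X →L[𝕜] X) := by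
  have := hS.finiteDimensional_ker_one_add
  obtain ⟨P, hP⟩ := Submodule.ClosedComplemented.of_finiteDimensional (1 + S : X →L[𝕜] X).ker
  obtain ⟨π, hπ, hπA⟩ := hS.exists_surjective_comp_one_add_eq_zero
  obtain ⟨σ, hσ⟩ := (π ∘L j).toLinearMap.exists_rightInverse_of_surjective <|
    LinearMap.range_eq_top.mpr (hπ.denseRange.comp hjd π.continuous).surjective_of_finiteDimensional
  have hπσ (n : (1 + S : X →L[𝕜] X).ker) : π (j (σ n)) = n := LinearMap.congr_fun hσ n
  refine ⟨σ.toContinuousLinearMap ∘L P,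
    (isCompactOperator_of_locallyCompactSpace_dom P).clm_comp _, ?_⟩
  rw [injective_iff_map_eq_zero]
  intro x hx
  replace hx : (1 + S) x + j (σ (P x)) = 0 := by
    rw [← hx]; simp [add_assoc]; rfl
  have hPx : P x = 0 := by
    simpa only [map_add, hπA, zero_add, hπσ, map_zero] using congrArg π hx
  have hAx : (1 + S) x = 0 := by rwa [hPx, map_zero, map_zero, add_zero] at hx
  exact (congrArg Subtype.val (hP ⟨x, hAx⟩)).symm.trans (by rw [hPx]; rfl)

theorem ker_one_add_le_range {Y : Type*} [NormedAddCommGroup Y] [NormedSpace 𝕜 Y]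
    [CompleteSpace Y] {j : Y →L[𝕜] X} (hj : Injective j) (hjd : DenseRange j) {T : Y →L[𝕜] Y}
    (hS : IsCompactOperator S) (hT : IsCompactOperator T) (hST : ∀ y, j (T y) = S (j y)) :
    (1 + S : X →L[𝕜] X).ker ≤ (j : Y →ₗ[𝕜] X).range := by
  obtain ⟨M, hM, hinjX⟩ := exists_injective_one_add_add_comp hjd hS
  have hjA (y : Y) :
      j ((1 + (T + M ∘L j) : Y →L[𝕜] Y) y) = (1 + (S + j ∘L M) : X →L[𝕜] X) (j y) := by
    simp [hST]
  have hinjY : Injective (1 + (T + M ∘L j) : Y →L[𝕜] Y) := fun y y' h ↦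
    hj (hinjX (by rw [← hjA, ← hjA, h]))
  have hsurjY := (bijective_one_add_of_injective (hT.add (hM.comp_clm j)) hinjY).2
  intro x hx
  obtain ⟨y, hy⟩ := hsurjY (M x)
  refine ⟨y, hinjX ?_⟩
  change (1 + (S + j ∘L M) : X →L[𝕜] X) (j y) = _
  have hx' : x + S x = 0 := by simpa using hx
  rw [← hjA, hy]
  simp [← add_assoc, hx']

end IsCompactOperator

/-- Functional analytic lemma: for a scale of Banach spaces `B l` with continuous
injective embeddings `j l : B (l+1) ↪ B l` (composites into `B 0` given by `e l`),
dense intersection, and a linear operator `R` on `B 0` restricting to a compact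
endomorphism `Rl l` of each `B l`, the kernel of `I + R` lies in `⋂ l, B l`. -/
theorem stmt_0
    (B : ℕ → Type*) [∀ l, NormedAddCommGroup (B l)] [∀ l, NormedSpace ℝ (B l)]
    [∀ l, CompleteSpace (B l)]
    (j : ∀ l, B (l + 1) →L[ℝ] B l)
    (hj : ∀ l, Function.Injective (j l))
    (e : ∀ l, B l →L[ℝ] B 0)
    (he0 : e 0 = ContinuousLinearMap.id ℝ (B 0))
    (heS : ∀ l, e (l + 1) = (e l).comp (j l))
    (hdense : ∀ l, Dense {x : B l | e l x ∈ ⋂ μ, Set.range (e μ)})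
    (R : B 0 →ₗ[ℝ] B 0)
    (Rl : ∀ l, B l →ₗ[ℝ] B l)
    (hcomm : ∀ l (x : B l), e l (Rl l x) = R (e l x))
    (hRc : ∀ l, IsCompactOperator (Rl l)) :
    ∀ u : B 0, u + R u = 0 → ∀ l, u ∈ Set.range (e l) := by
  have he : ∀ l, Injective (e l) := fun l ↦ by
    induction l with
    | zero => simpa [he0] using injective_id
    | succ l ih => rw [heS, ContinuousLinearMap.coe_comp]; exact ih.comp (hj l)
  let Rc l := ContinuousLinearMap.mkOfIsCompactOperator (hRc l)
  intro u hu l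
  induction l with
  | zero => exact ⟨u, by simp [he0]⟩
  | succ l ih =>
    obtain ⟨x, rfl⟩ := ih
    have hx : x ∈ (1 + Rc l).ker := he l <| by simpa [Rc, hcomm] using hu
    have hjd : DenseRange (j l) := (hdense l).mono fun x' hx' ↦ by
      obtain ⟨z, hz⟩ := Set.mem_iInter.mp hx' (l + 1)
      exact ⟨z, he l (by simpa [heS] using hz)⟩
    have hjR (y : B (l + 1)) : j l (Rc (l + 1) y) = Rc l (j l y) :=
      he l (by simpa [Rc, hcomm, heS] using hcomm (l + 1) y)
    obtain ⟨z, rfl⟩ :=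
      IsCompactOperator.ker_one_add_le_range (hj l) hjd (hRc l) (hRc (l + 1)) hjR hx
    exact ⟨z, by simp [heS]⟩
end

section
/- Let $B_1 \subseteq B_0$ be Banach spaces with continuous embedding, $B_1$ dense in $B_0$, and let $R\colon B_0 \to B_0$ be a linear operator with $R(B_1)\subseteq B_1$ such that $R$ is compact as an endomorphism of $B_0$ and $R|_{B_1}$ is compact as an endomorphism of $B_1$. Then every $u \in B_0$ with $u + Ru = 0$ lies in $B_1$. -/
/-!
Riesz theory of `S = 1 + T` with `T` compact: `ker S` is finite dimensional, `range S` is closed,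
and the chains `ker (S ^ n)` and `range (S ^ n)` are eventually constant, since a strictly
monotone chain of closed subspaces yields, by Riesz's lemma, a bounded sequence with
`1`-separated images under `T`.

Choose `m` such that `ker (S₀ ^ m)` meets `range (S₀ ^ m)` trivially on `B₀`, while
`B₁ = ker (S₁ ^ m) + range (S₁ ^ m)`. As `j` intertwines `S₁` and `S₀`, the range of `j` lies in
`j (ker (S₁ ^ m)) + range (S₀ ^ m)`, which is closed (finite dimensional plus closed) and dense,
hence all of `B₀`. If `S₀ u = 0` and `u = j a + S₀ ^ m y` with `S₁ ^ m a = 0`, then `S₀ ^ m y`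
lies both in the kernel and in the range of `S₀ ^ m`, so it vanishes and `u = j a`.
-/

open Filter Topology

namespace Module.End

section Semiring

variable {R M : Type*} [Semiring R] [AddCommMonoid M] [Module R M] {f : Module.End R M} {n : ℕ}

theorem ker_pow_add_eq_of_ker_pow_succ_eq
    (h : LinearMap.ker (f ^ (n + 1)) = LinearMap.ker (f ^ n)) (k : ℕ) :
    LinearMap.ker (f ^ (n + k)) = LinearMap.ker (f ^ n) := by
  induction k with
  | zero => rfl
  | succ k ih =>
    rw [← ih, show n + (k + 1) = n + 1 + k by omega, pow_add, mul_eq_comp, LinearMap.ker_comp, h,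
      ← LinearMap.ker_comp, ← mul_eq_comp, ← pow_add]

theorem range_pow_add_eq_of_range_pow_succ_eq
    (h : LinearMap.range (f ^ (n + 1)) = LinearMap.range (f ^ n)) (k : ℕ) :
    LinearMap.range (f ^ (n + k)) = LinearMap.range (f ^ n) := by
  induction k with
  | zero => rfl
  | succ k ih =>
    rw [← ih, show n + (k + 1) = k + (n + 1) by omega, pow_add, mul_eq_comp,
      LinearMap.range_comp, h, ← LinearMap.range_comp, ← mul_eq_comp, ← pow_add, add_comm k n]

theorem eventually_disjoint_ker_pow_range_pow_of_ker_pow_succ_le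
    (h : LinearMap.ker (f ^ (n + 1)) ≤ LinearMap.ker (f ^ n)) :
    ∀ᶠ m in atTop, Disjoint (LinearMap.ker (f ^ m)) (LinearMap.range (f ^ m)) := by
  have hstab (m : ℕ) (hm : n ≤ m) : LinearMap.ker (f ^ m) = LinearMap.ker (f ^ n) := by
    obtain ⟨k, rfl⟩ := Nat.exists_eq_add_of_le hm
    exact ker_pow_add_eq_of_ker_pow_succ_eq (h.antisymm (f.iterateKer.monotone n.le_succ)) k
  filter_upwards [eventually_ge_atTop n] with m hm
  rw [Submodule.disjoint_def]
  rintro - hx ⟨y, rfl⟩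
  have hy : y ∈ LinearMap.ker (f ^ (m + m)) := by rwa [LinearMap.mem_ker, pow_add, mul_apply]
  rwa [hstab _ (by omega), ← hstab m hm, LinearMap.mem_ker] at hy

end Semiring

section Ring

variable {R M : Type*} [Ring R] [AddCommGroup M] [Module R M] {f : Module.End R M} {n : ℕ}

theorem eventually_codisjoint_ker_pow_range_pow_of_range_pow_le_succ
    (h : LinearMap.range (f ^ n) ≤ LinearMap.range (f ^ (n + 1))) :
    ∀ᶠ m in atTop, Codisjoint (LinearMap.ker (f ^ m)) (LinearMap.range (f ^ m)) := by
  have hstab (m : ℕ) (hm : n ≤ m) : LinearMap.range (f ^ m) = LinearMap.range (f ^ n) := by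
    obtain ⟨k, rfl⟩ := Nat.exists_eq_add_of_le hm
    have h' : LinearMap.range (f ^ (n + 1)) ≤ LinearMap.range (f ^ n) :=
      f.iterateRange.monotone n.le_succ
    exact range_pow_add_eq_of_range_pow_succ_eq (h'.antisymm h) k
  filter_upwards [eventually_ge_atTop n] with m hm
  rw [codisjoint_iff, Submodule.eq_top_iff']
  intro x
  obtain ⟨y, hy⟩ : (f ^ m) x ∈ LinearMap.range (f ^ (m + m)) := by
    rw [hstab _ (by omega), ← hstab m hm]
    exact LinearMap.mem_range_self _ x
  refine Submodule.mem_sup.2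
    ⟨x - (f ^ m) y, ?_, (f ^ m) y, LinearMap.mem_range_self _ y, sub_add_cancel _ _⟩
  rw [LinearMap.mem_ker, map_sub, ← mul_apply, ← pow_add, hy, sub_self]

end Ring

end Module.End

open LinearMap in
theorem LinearMap.ker_le_range_of_denseRange_of_comp_eq {𝕜 E₀ E₁ : Type*}
    [NontriviallyNormedField 𝕜] [CompleteSpace 𝕜]
    [AddCommGroup E₀] [TopologicalSpace E₀] [IsTopologicalAddGroup E₀] [Module 𝕜 E₀]
    [ContinuousSMul 𝕜 E₀] [AddCommGroup E₁] [Module 𝕜 E₁]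
    {j : E₁ →ₗ[𝕜] E₀} (hj : DenseRange j) {f₀ : Module.End 𝕜 E₀} {f₁ : Module.End 𝕜 E₁}
    (hcomm : f₀ ∘ₗ j = j ∘ₗ f₁) (h₀ : Disjoint (ker f₀) (range f₀))
    (h₀c : IsClosed (range f₀ : Set E₀)) (h₁ : Codisjoint (ker f₁) (range f₁))
    [FiniteDimensional 𝕜 (ker f₁)] :
    ker f₀ ≤ range j := by
  have hj_le : range j ≤ range f₀ ⊔ (ker f₁).map j := by
    rintro - ⟨b, rfl⟩
    obtain ⟨a, ha, -, ⟨c, rfl⟩, rfl⟩ :=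
      Submodule.mem_sup.1 (h₁.eq_top ▸ Submodule.mem_top (x := b))
    rw [map_add]
    exact add_mem (Submodule.mem_sup_right ⟨a, ha, rfl⟩)
      (Submodule.mem_sup_left ⟨j c, LinearMap.congr_fun hcomm c⟩)
  have hsup : range f₀ ⊔ (ker f₁).map j = ⊤ := by
    refine Submodule.eq_top_iff'.2 fun x => ?_
    have hclosed := Submodule.isClosed_sup_finiteDimensional _ ((ker f₁).map j) h₀c
    rw [← SetLike.mem_coe, ← hclosed.closure_eq]
    exact closure_mono hj_le (hj x)
  intro u hu
  obtain ⟨-, ⟨y, rfl⟩, -, ⟨a, ha, rfl⟩, rfl⟩ :=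
    Submodule.mem_sup.1 (hsup ▸ Submodule.mem_top (x := u))
  have hja : f₀ (j a) = 0 := by
    rw [← comp_apply, hcomm, comp_apply, mem_ker.1 ha, map_zero]
  have hy : f₀ y ∈ ker f₀ := by
    rwa [mem_ker, map_add, hja, add_zero] at hu
  rw [Submodule.disjoint_def.1 h₀ _ hy (mem_range_self f₀ y), zero_add]
  exact mem_range_self j a

section NontriviallyNormedField

variable {𝕜 E F : Type*} [NontriviallyNormedField 𝕜] [NormedAddCommGroup E] [NormedSpace 𝕜 E]
  [NormedAddCommGroup F] [NormedSpace 𝕜 F]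

theorem Submodule.exists_mem_forall_one_le_norm_sub {V W : Submodule 𝕜 E}
    (hV : IsClosed (V : Set E)) (hVW : V < W) {c : 𝕜} (hc : 1 < ‖c‖) {R : ℝ} (hR : ‖c‖ < R) :
    ∃ x ∈ W, ‖x‖ ≤ R ∧ ∀ y ∈ V, 1 ≤ ‖x - y‖ := by
  obtain ⟨x, hxW, hxV⟩ := SetLike.exists_of_lt hVW
  obtain ⟨⟨x₀, hx₀⟩, hx₀R, hx₀V⟩ := riesz_lemma_of_norm_lt (F := V.comap W.subtype) hc hR
    (hV.preimage continuous_subtype_val) ⟨⟨x, hxW⟩, hxV⟩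
  exact ⟨x₀, hx₀, hx₀R, fun y hy => hx₀V ⟨y, hVW.le hy⟩ hy⟩

theorem IsCompactOperator.exists_lt_norm_sub_lt {f : E →ₗ[𝕜] F} (hf : IsCompactOperator f)
    {x : ℕ → E} {r : ℝ} (hx : ∀ n, ‖x n‖ ≤ r) {ε : ℝ} (hε : 0 < ε) :
    ∃ m n, m < n ∧ ‖f (x m) - f (x n)‖ < ε := by
  obtain ⟨K, hK, hfK⟩ := hf.image_closedBall_subset_compact r
  obtain ⟨_, -, φ, hφ, hlim⟩ :=
    hK.tendsto_subseq fun n => hfK ⟨x n, mem_closedBall_zero_iff.2 (hx n), rfl⟩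
  obtain ⟨N, hN⟩ := Metric.cauchySeq_iff'.1 hlim.cauchySeq ε hε
  refine ⟨φ N, φ (N + 1), hφ N.lt_succ_self, ?_⟩
  rw [← dist_eq_norm, dist_comm]
  exact hN (N + 1) N.le_succ

variable {T : Module.End 𝕜 E} (hT : IsCompactOperator T)
include hT

theorem IsCompactOperator.continuous_one_add : Continuous ⇑(1 + T) :=
  continuous_id.add hT.continuous

theorem IsCompactOperator.continuous_one_add_pow (n : ℕ) : Continuous ⇑((1 + T) ^ n) := by
  rw [Module.End.coe_pow]
  exact hT.continuous_one_add.iterate n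

theorem IsCompactOperator.isClosed_ker_one_add_pow (n : ℕ) :
    IsClosed (LinearMap.ker ((1 + T) ^ n) : Set E) :=
  isClosed_singleton.preimage (hT.continuous_one_add_pow n)

theorem IsCompactOperator.one_add_pow_sub_one (n : ℕ) :
    IsCompactOperator ⇑((1 + T) ^ n - 1) := by
  induction n with
  | zero =>
    rw [pow_zero, sub_self]
    exact isCompactOperator_zero
  | succ n ih =>
    have h : (1 + T) ^ (n + 1) - 1 = (1 + T) * ((1 + T) ^ n - 1) + T := by
      rw [pow_succ', mul_sub, mul_one]
      abel
    rw [h]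
    exact (ih.continuous_comp hT.continuous_one_add).add hT

theorem IsCompactOperator.exists_tendsto_subseq_of_tendsto_one_add {x : ℕ → E} {r : ℝ}
    (hx : ∀ n, ‖x n‖ ≤ r) {y : E} (hy : Tendsto (fun n => (1 + T) (x n)) atTop (𝓝 y)) :
    ∃ (a : E) (φ : ℕ → ℕ), StrictMono φ ∧ Tendsto (x ∘ φ) atTop (𝓝 a) ∧ (1 + T) a = y := by
  obtain ⟨K, hK, hTK⟩ := hT.image_closedBall_subset_compact r
  obtain ⟨b, -, φ, hφ, hb⟩ :=
    hK.tendsto_subseq fun n => hTK ⟨x n, mem_closedBall_zero_iff.2 (hx n), rfl⟩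
  have hyφ := hy.comp hφ.tendsto_atTop
  have hxφ : Tendsto (x ∘ φ) atTop (𝓝 (y - b)) := by
    simpa [Function.comp_def] using hyφ.sub hb
  exact ⟨y - b, φ, hφ, hxφ,
    tendsto_nhds_unique ((hT.continuous_one_add.tendsto _).comp hxφ) hyφ⟩

theorem IsCompactOperator.exists_ker_one_add_pow_succ_le :
    ∃ n, LinearMap.ker ((1 + T) ^ (n + 1)) ≤ LinearMap.ker ((1 + T) ^ n) := by
  by_contra! h
  set S := 1 + T with hS
  have hlt (n : ℕ) : LinearMap.ker (S ^ n) < LinearMap.ker (S ^ (n + 1)) :=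
    lt_of_le_not_ge (S.iterateKer.monotone n.le_succ) (h n)
  obtain ⟨c, hc⟩ := NormedField.exists_one_lt_norm 𝕜
  choose x hxker hxnorm hxfar using fun n =>
    Submodule.exists_mem_forall_one_le_norm_sub (hT.isClosed_ker_one_add_pow n) (hlt n) hc
      (lt_add_one ‖c‖)
  have hS_mem {k : ℕ} {z : E} (hz : z ∈ LinearMap.ker (S ^ (k + 1))) :
      S z ∈ LinearMap.ker (S ^ k) := by
    rwa [LinearMap.mem_ker, ← Module.End.mul_apply, ← pow_succ]
  obtain ⟨m, n, hmn, hclose⟩ := hT.exists_lt_norm_sub_lt hxnorm one_pos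
  have hy : S (x n) - S (x m) + x m ∈ LinearMap.ker (S ^ n) :=
    add_mem (sub_mem (hS_mem (hxker n)) (S.iterateKer.monotone hmn.le (hS_mem (hxker m))))
      (S.iterateKer.monotone hmn (hxker m))
  have key : T (x m) - T (x n) = x n - (S (x n) - S (x m) + x m) := by
    simp only [hS, LinearMap.add_apply, Module.End.one_apply]
    abel
  exact hclose.not_ge (key ▸ hxfar n _ hy)

theorem IsCompactOperator.finiteDimensional_ker_one_add_s1 [CompleteSpace 𝕜] :
    FiniteDimensional 𝕜 (LinearMap.ker (1 + T)) := by
  have hneg (v : E) (hv : v ∈ LinearMap.ker (1 + T)) : T v = -v :=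
    eq_neg_of_add_eq_zero_right (LinearMap.mem_ker.1 hv)
  have hV (v : E) (hv : v ∈ LinearMap.ker (1 + T)) : T v ∈ LinearMap.ker (1 + T) :=
    hneg v hv ▸ neg_mem hv
  have hid := (hT.restrict hV (by simpa using hT.isClosed_ker_one_add_pow 1)).neg
  have : -⇑(T.restrict hV) = id := funext fun v => Subtype.ext (by simp [hneg v v.2])
  exact FiniteDimensional.of_isCompactOperator_id (this ▸ hid)

theorem IsCompactOperator.finiteDimensional_ker_one_add_pow [CompleteSpace 𝕜] (n : ℕ) :
    FiniteDimensional 𝕜 (LinearMap.ker ((1 + T) ^ n)) := by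
  have h := (hT.one_add_pow_sub_one n).finiteDimensional_ker_one_add_s1
  rwa [add_sub_cancel] at h

end NontriviallyNormedField

section RCLike

variable {𝕜 E : Type*} [RCLike 𝕜] [NormedAddCommGroup E] [NormedSpace 𝕜 E]
  {T : Module.End 𝕜 E} (hT : IsCompactOperator T)
include hT

theorem IsCompactOperator.exists_norm_le_mul_norm_one_add {W : Submodule 𝕜 E}
    (hW : IsClosed (W : Set E)) (hWker : Disjoint W (LinearMap.ker (1 + T))) :
    ∃ C > 0, ∀ w ∈ W, ‖w‖ ≤ C * ‖(1 + T) w‖ := by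
  by_contra! h
  have hv (n : ℕ) : ∃ v ∈ W, ‖v‖ = 1 ∧ ‖(1 + T) v‖ ≤ 1 / (n + 1) := by
    obtain ⟨w, hwW, hw⟩ := h (n + 1) n.cast_add_one_pos
    have hw0 : w ≠ 0 := by
      rintro rfl
      simp at hw
    refine ⟨(‖w‖⁻¹ : 𝕜) • w, W.smul_mem _ hwW, norm_smul_inv_norm hw0, ?_⟩
    rw [map_smul, norm_smul, norm_inv, RCLike.norm_ofReal, abs_norm,
      inv_mul_le_iff₀ (by positivity), mul_one_div, le_div_iff₀ n.cast_add_one_pos, mul_comm]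
    exact hw.le
  choose v hvW hvnorm hvS using hv
  have hlim0 : Tendsto (fun n => (1 + T) (v n)) atTop (𝓝 0) :=
    squeeze_zero_norm hvS tendsto_one_div_add_atTop_nhds_zero_nat
  obtain ⟨a, φ, -, hva, ha⟩ :=
    hT.exists_tendsto_subseq_of_tendsto_one_add (fun n => (hvnorm n).le) hlim0
  have haW : a ∈ W := hW.mem_of_tendsto hva (Eventually.of_forall fun n => hvW _)
  have ha1 : ‖a‖ = 1 := tendsto_nhds_unique hva.norm (by simp [hvnorm])
  have ha0 : a = 0 := Submodule.disjoint_def.1 hWker a haW ha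
  simp [ha0] at ha1

theorem IsCompactOperator.isClosed_range_one_add :
    IsClosed (LinearMap.range (1 + T) : Set E) := by
  have := hT.finiteDimensional_ker_one_add_s1
  obtain ⟨W, hW, hcompl⟩ := (Submodule.ClosedComplemented.of_finiteDimensional
    (LinearMap.ker (1 + T))).exists_isClosed_isCompl
  obtain ⟨C, hC0, hC⟩ := hT.exists_norm_le_mul_norm_one_add hW hcompl.symm.disjoint
  refine isClosed_of_closure_subset fun y hy => ?_
  obtain ⟨z, hz, hzy⟩ := mem_closure_iff_seq_limit.1 hy
  have hw (n : ℕ) : ∃ w ∈ W, (1 + T) w = z n := by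
    obtain ⟨x, hx⟩ := hz n
    obtain ⟨k, hk, w, hw, rfl⟩ :=
      Submodule.mem_sup.1 (hcompl.sup_eq_top ▸ Submodule.mem_top (x := x))
    exact ⟨w, hw, by rw [← hx, map_add, LinearMap.mem_ker.1 hk, zero_add]⟩
  choose w hwW hwz using hw
  obtain ⟨B, hB⟩ := isBounded_iff_forall_norm_le.1 (Metric.isBounded_range_of_tendsto z hzy)
  have hwB (n : ℕ) : ‖w n‖ ≤ C * B :=
    (hC _ (hwW n)).trans (by rw [hwz]; gcongr; exact hB _ ⟨n, rfl⟩)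
  obtain ⟨a, -, -, -, ha⟩ :=
    hT.exists_tendsto_subseq_of_tendsto_one_add hwB (by simpa [hwz] using hzy)
  exact ⟨a, ha⟩

theorem IsCompactOperator.isClosed_range_one_add_pow (n : ℕ) :
    IsClosed (LinearMap.range ((1 + T) ^ n) : Set E) := by
  have h := (hT.one_add_pow_sub_one n).isClosed_range_one_add
  rwa [add_sub_cancel] at h

theorem IsCompactOperator.exists_range_one_add_pow_le_succ :
    ∃ n, LinearMap.range ((1 + T) ^ n) ≤ LinearMap.range ((1 + T) ^ (n + 1)) := by
  by_contra! h
  set S := 1 + T with hS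
  have hanti {a b : ℕ} (hab : a ≤ b) : LinearMap.range (S ^ b) ≤ LinearMap.range (S ^ a) :=
    S.iterateRange.monotone hab
  have hlt (n : ℕ) : LinearMap.range (S ^ (n + 1)) < LinearMap.range (S ^ n) :=
    lt_of_le_not_ge (hanti n.le_succ) (h n)
  obtain ⟨c, hc⟩ := NormedField.exists_one_lt_norm 𝕜
  choose x hxrange hxnorm hxfar using fun n =>
    Submodule.exists_mem_forall_one_le_norm_sub (hT.isClosed_range_one_add_pow (n + 1)) (hlt n)
      hc (lt_add_one ‖c‖)
  have hS_mem {k : ℕ} {z : E} (hz : z ∈ LinearMap.range (S ^ k)) :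
      S z ∈ LinearMap.range (S ^ (k + 1)) := by
    obtain ⟨y, rfl⟩ := hz
    exact ⟨y, by rw [pow_succ', Module.End.mul_apply]⟩
  obtain ⟨m, n, hmn, hclose⟩ := hT.exists_lt_norm_sub_lt hxnorm one_pos
  have hy : S (x m) - S (x n) + x n ∈ LinearMap.range (S ^ (m + 1)) :=
    add_mem (sub_mem (hS_mem (hxrange m)) (hanti (by omega) (hS_mem (hxrange n))))
      (hanti hmn (hxrange n))
  have key : T (x m) - T (x n) = -(x m - (S (x m) - S (x n) + x n)) := by
    simp only [hS, LinearMap.add_apply, Module.End.one_apply]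
    abel
  exact hclose.not_ge (by rw [key, norm_neg]; exact hxfar m _ hy)

end RCLike

theorem stmt_1_general {B₀ B₁ : Type*}
    [NormedAddCommGroup B₀] [NormedSpace ℝ B₀]
    [NormedAddCommGroup B₁] [NormedSpace ℝ B₁]
    (j : B₁ →L[ℝ] B₀) (hdense : DenseRange j)
    (R : B₀ →ₗ[ℝ] B₀) (hRc : IsCompactOperator R)
    (R₁ : B₁ →ₗ[ℝ] B₁) (hcomm : ∀ x, j (R₁ x) = R (j x))
    (hR₁c : IsCompactOperator R₁) :
    ∀ u : B₀, u + R u = 0 → u ∈ Set.range j := by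
  intro u hu
  obtain ⟨p, hp⟩ := hRc.exists_ker_one_add_pow_succ_le
  obtain ⟨q, hq⟩ := hR₁c.exists_range_one_add_pow_le_succ
  obtain ⟨m, hm, hdisj, hcodisj⟩ := ((eventually_ge_atTop 1).and
    ((Module.End.eventually_disjoint_ker_pow_range_pow_of_ker_pow_succ_le hp).and
      (Module.End.eventually_codisjoint_ker_pow_range_pow_of_range_pow_le_succ hq))).exists
  have hcomm_pow :
      ((1 + R) ^ m) ∘ₗ (j : B₁ →ₗ[ℝ] B₀) = (j : B₁ →ₗ[ℝ] B₀) ∘ₗ ((1 + R₁) ^ m) :=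
    Module.End.commute_pow_left_of_commute (by ext x; simp [hcomm]) m
  have := hR₁c.finiteDimensional_ker_one_add_pow m
  have hu_ker : u ∈ LinearMap.ker ((1 + R) ^ m) :=
    (1 + R).iterateKer.monotone hm (by simpa using hu)
  exact LinearMap.ker_le_range_of_denseRange_of_comp_eq hdense hcomm_pow hdisj
    (hRc.isClosed_range_one_add_pow m) hcodisj hu_ker

/-- Two-space version: `B₁ ⊆ B₀` Banach with continuous dense embedding `j`,
`R` compact on `B₀` restricting to a compact endomorphism `R₁` of `B₁`; then
every `u` with `u + R u = 0` lies in `B₁`. -/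
theorem stmt_1 {B₀ B₁ : Type*}
    [NormedAddCommGroup B₀] [NormedSpace ℝ B₀] [CompleteSpace B₀]
    [NormedAddCommGroup B₁] [NormedSpace ℝ B₁] [CompleteSpace B₁]
    (j : B₁ →L[ℝ] B₀) (hj : Function.Injective j) (hdense : DenseRange j)
    (R : B₀ →ₗ[ℝ] B₀) (hRc : IsCompactOperator R)
    (R₁ : B₁ →ₗ[ℝ] B₁) (hcomm : ∀ x, j (R₁ x) = R (j x))
    (hR₁c : IsCompactOperator R₁) :
    ∀ u : B₀, u + R u = 0 → u ∈ Set.range j :=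
  stmt_1_general j hdense R hRc R₁ hcomm hR₁c
end
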